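/- Let H_n be defined by H_0 = 1, H_1 = 0, and 2 H_n = 2n(n-1) H_{n-1} + n(n-1)^2 H_{n-2} for n ≥ 2. Then for all n ≥ 5, e^{-2n}·n^{1/4 + 2n} < H_n < e^{-2n}·n^{1 + 2n}. -/

import Mathlib

/-- `H n` defined by `H_0 = 1`, `H_1 = 0` and
`2 H_n = 2n(n-1) H_{n-1} + n(n-1)^2 H_{n-2}` for `n ≥ 2`. -/
noncomputable def H : ℕ → ℝ
  | 0 => 1
  | 1 => 0
  | (m + 2) =>
      (2 * ((m : ℝ) + 2) * ((m : ℝ) + 1) * H (m + 1)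
        + ((m : ℝ) + 2) * ((m : ℝ) + 1) ^ 2 * H m) / 2

open Real

lemma log_series (x : ℝ) (h1 : 0 < x) (h2 : x ≤ 1/4) :
    -(x + x^2/2 + x^3/3 + x^4/(1-x)) ≤ Real.log (1-x) ∧
    Real.log (1-x) ≤ -(x + x^2/2 + x^3/3) + x^4/(1-x) := by
  have hx : |x| < 1 := by rw [abs_of_pos h1]; linarith
  have := Real.abs_log_sub_add_sum_range_le hx 3
  rw [abs_of_pos h1] at this
  simp [Finset.sum_range_succ] at this
  rw [abs_le] at this
  constructor <;> nlinarith [this.1, this.2]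

lemma log_ub (x : ℝ) (h1 : 0 < x) (h2 : x < 1) : Real.log (1-x) ≤ -x := by
  have := Real.log_le_sub_one_of_pos (x := 1-x) (by linarith)
  linarith

lemma exp_nat_lb (k : ℕ) : (2.7182818283:ℝ)^k ≤ Real.exp k := by
  rw [show ((k:ℝ)) = (k:ℝ)*1 by ring, Real.exp_nat_mul]
  exact pow_le_pow_left₀ (by norm_num) (le_of_lt Real.exp_one_gt_d9) k

lemma exp_nat_ub (k : ℕ) : Real.exp k ≤ (2.7182818286:ℝ)^k := by
  rw [show ((k:ℝ)) = (k:ℝ)*1 by ring, Real.exp_nat_mul]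
  exact pow_le_pow_left₀ (le_of_lt (Real.exp_pos 1)) (le_of_lt Real.exp_one_lt_d9) k

lemma rpow_lt_of_pow4 (a b : ℝ) (p : ℝ) (ha : (0:ℝ) < a) (hb : 0 ≤ b)
    (h : a ^ (4 * p) < b^(4:ℕ)) : a ^ p < b := by
  apply lt_of_pow_lt_pow_left₀ 4 hb
  rw [← Real.rpow_natCast (a ^ p) 4, ← Real.rpow_mul (le_of_lt ha)]
  rwa [show p * ((4:ℕ):ℝ) = 4 * p by push_cast; ring]

lemma exp_ub3 (t : ℝ) (h1 : 0 ≤ t) (h2 : t ≤ 1) :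
    Real.exp (-t) ≤ 1 - t + t^2/2 + (2/9)*t^3 := by
  have h : |(-t)| ≤ 1 := by rw [abs_neg, abs_of_nonneg h1]; exact h2
  have := Real.exp_bound h (n := 3) (by norm_num)
  simp [Finset.sum_range_succ, abs_neg, abs_of_nonneg h1] at this
  rw [abs_le] at this
  have := this.2
  norm_num [Nat.factorial] at this
  nlinarith [this]

lemma exp_ub2 (u : ℝ) (h1 : 0 ≤ u) (h2 : u ≤ 1) :
    Real.exp u ≤ 1 + u + (3/4)*u^2 := by
  have h : |u| ≤ 1 := by rw [abs_of_nonneg h1]; exact h2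
  have := Real.exp_bound h (n := 2) (by norm_num)
  simp [Finset.sum_range_succ, abs_of_nonneg h1] at this
  rw [abs_le] at this
  have := this.2
  norm_num [Nat.factorial] at this
  nlinarith [this]


lemma polyB (x : ℝ) (hx0 : 0 < x) (hx8 : x ≤ 1/8) :
    x*(1-x)^2/2 * (1 + 3*x + (27/4)*x^2) ≤ x/2 + x^2/2 + (7/8)*x^3 := by
  nlinarith [mul_nonneg (mul_nonneg (mul_nonneg (mul_nonneg hx0.le hx0.le) hx0.le) hx0.le)
    (by linarith : (0:ℝ) ≤ 21/4 - (27/8)*x)]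

lemma polyx2 (x : ℝ) (hx0 : 0 < x) (hx8 : x ≤ 1/8) : x^2 ≤ x/8 := by
  nlinarith [mul_nonneg hx0.le (by linarith : (0:ℝ) ≤ 1/8 - x)]

lemma polyx3 (x : ℝ) (hx0 : 0 < x) (hx8 : x ≤ 1/8) : x^3 ≤ x/64 := by
  nlinarith [mul_nonneg (mul_nonneg hx0.le (by linarith : (0:ℝ) ≤ 1/8 - x))
    (by linarith : (0:ℝ) ≤ 1/8 + x)]

set_option maxHeartbeats 1000000 in
lemma step_up (n : ℝ) (hn : 8 ≤ n) :
    n*(n-1) * (Real.exp (-2*(n-1)) * (n-1) ^ ((1:ℝ) + 2*(n-1)))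
    + (n*(n-1)^2/2) * (Real.exp (-2*(n-2)) * (n-2) ^ ((1:ℝ) + 2*(n-2)))
    ≤ Real.exp (-2*n) * n ^ ((1:ℝ) + 2*n) := by
  have hn0 : (0:ℝ) < n := by linarith
  have hn1 : (0:ℝ) < n - 1 := by linarith
  have hn2 : (0:ℝ) < n - 2 := by linarith
  obtain ⟨x, hxdef⟩ : ∃ x : ℝ, x = 1/n := ⟨1/n, rfl⟩
  have hnx : n = 1/x := by rw [hxdef]; field_simp
  have hx0 : 0 < x := by rw [hxdef]; positivity
  have hx8 : x ≤ 1/8 := by rw [hxdef, div_le_div_iff₀ hn0 (by norm_num)]; linarith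
  have h1x : 1 - x = (n-1)/n := by rw [hxdef]; field_simp
  have h2x : 1 - 2*x = (n-2)/n := by rw [hxdef]; field_simp
  have h1x0 : 0 < 1 - x := by rw [h1x]; positivity
  have h2x0 : 0 < 1 - 2*x := by rw [h2x]; positivity
  have hlx : Real.log (1-x) = Real.log (n-1) - Real.log n := by
    rw [h1x, Real.log_div (by linarith) (by linarith)]
  have hl2x : Real.log (1-2*x) = Real.log (n-2) - Real.log n := by
    rw [h2x, Real.log_div (by linarith) (by linarith)]
  rw [Real.rpow_def_of_pos hn0, Real.rpow_def_of_pos hn1, Real.rpow_def_of_pos hn2]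
  rw [show Real.exp (-2*n) * Real.exp (Real.log n * (1+2*n))
      = Real.exp (-2*n + Real.log n * (1+2*n)) from (Real.exp_add _ _).symm]
  set C0 : ℝ := -2*n + Real.log n * (1 + 2*n) with hC0
  set EA : ℝ := 2 + 2*n * Real.log (1-x) with hEA
  set EB : ℝ := 4 + (2*n - 3) * Real.log (1-2*x) with hEB
  clear_value C0 EA EB
  obtain ⟨hs1, hs1'⟩ := log_series x hx0 (by linarith)
  obtain ⟨hs2, hs2'⟩ := log_series (2*x) (by linarith) (by linarith)
  -- upper bound on EA : EA ≤ -s with s = x + (2/3)x² - 2x³/(1-x)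
  have hEAub : EA ≤ -(x + (2/3)*x^2 - 2*x^3/(1-x)) := by
    have m1 : 2*n*Real.log (1-x) ≤ 2*n*(-(x + x^2/2 + x^3/3) + x^4/(1-x)) :=
      mul_le_mul_of_nonneg_left hs1' (by linarith)
    have m2 : 2*n*(-(x + x^2/2 + x^3/3) + x^4/(1-x)) = -(2 + x + (2/3)*x^2 - 2*x^3/(1-x)) := by
      rw [hnx]; field_simp; ring
    rw [hEA]; rw [m2] at m1; linarith
  -- upper bound on EB : EB ≤ u ≤ 3x
  have hEBub : EB ≤ 3*x := by
    have m1 : 2*n*Real.log (1-2*x) ≤ 2*n*(-(2*x + (2*x)^2/2 + (2*x)^3/3) + (2*x)^4/(1-2*x)) :=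
      mul_le_mul_of_nonneg_left hs2' (by linarith)
    have m2 : 2*n*(-(2*x + (2*x)^2/2 + (2*x)^3/3) + (2*x)^4/(1-2*x))
        = -(4 + 4*x + (16/3)*x^2 - 32*x^3/(1-2*x)) := by
      rw [hnx]; field_simp; ring
    have m3 : (-3) * Real.log (1-2*x) ≤ 3*(2*x + (2*x)^2/2 + (2*x)^3/3 + (2*x)^4/(1-2*x)) := by
      nlinarith [hs2]
    have h4 : (32*x^3 + 48*x^4)/(1-2*x) ≤ x - (2/3)*x^2 - 8*x^3 := by
      rw [div_le_iff₀ h2x0]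
      nlinarith [mul_nonneg (mul_nonneg hx0.le (by linarith : (0:ℝ) ≤ 1 - 8*x))
        (by nlinarith [sq_nonneg x, hx0.le] : (0:ℝ) ≤ 4*x^2 + (16/3)*x + 1)]
    have hsplit : EB = 4 + 2*n*Real.log (1-2*x) + (-3) * Real.log (1-2*x) := by rw [hEB]; ring
    have hcomb : EB ≤ 2*x + (2/3)*x^2 + 8*x^3 + (32*x^3 + 48*x^4)/(1-2*x) := by
      rw [hsplit]; rw [m2] at m1
      have e48 : 3 * ((2*x)^4/(1-2*x)) = 48*x^4/(1-2*x) := by ring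
      have e32 : 32*x^3/(1-2*x) + 48*x^4/(1-2*x) = (32*x^3 + 48*x^4)/(1-2*x) := by ring
      nlinarith [m1, m3]
    linarith
  -- Term 1 identity
  have hT1 : n*(n-1) * (Real.exp (-2*(n-1)) * Real.exp (Real.log (n-1) * (1 + 2*(n-1))))
      = Real.exp EA * Real.exp C0 := by
    rw [hEA, hC0, hlx, ← Real.exp_add]
    nth_rewrite 1 [← Real.exp_log hn0, ← Real.exp_log hn1]
    rw [← Real.exp_add, ← Real.exp_add, ← Real.exp_add]
    congr 1
    ring
  -- Term 2 identity
  have hT2 : (n*(n-1)^2/2) * (Real.exp (-2*(n-2)) * Real.exp (Real.log (n-2) * (1 + 2*(n-2))))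
      = (x * (1-x)^2 / 2) * (Real.exp EB * Real.exp C0) := by
    have hxe : x = Real.exp (-(Real.log n)) := by
      rw [Real.exp_neg, Real.exp_log hn0, hxdef, one_div]
    have h1xe : ((1:ℝ)-x)^2 = Real.exp (2*(Real.log (n-1) - Real.log n)) := by
      rw [two_mul, Real.exp_add, Real.exp_sub, Real.exp_log hn0, Real.exp_log hn1, h1x]
      ring
    rw [hEB, hC0, hl2x, h1xe, hxe, ← Real.exp_add, ← Real.exp_add]
    nth_rewrite 1 [← Real.exp_log hn0, ← Real.exp_log hn1]
    rw [show Real.exp (Real.log (n-1)) ^ 2 = Real.exp (2 * Real.log (n-1)) by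
      rw [two_mul, Real.exp_add]; ring]
    rw [div_eq_mul_inv _ (2:ℝ), show ((2:ℝ))⁻¹ = Real.exp (-(Real.log 2)) by
      rw [Real.exp_neg, Real.exp_log]; norm_num]
    rw [div_eq_mul_inv _ (2:ℝ), show ((2:ℝ))⁻¹ = Real.exp (-(Real.log 2)) by
      rw [Real.exp_neg, Real.exp_log]; norm_num]
    rw [← Real.exp_add, ← Real.exp_add, ← Real.exp_add, ← Real.exp_add, ← Real.exp_add,
      ← Real.exp_add]
    congr 1
    ring
  rw [hT1, hT2]
  have hC0pos : 0 < Real.exp C0 := Real.exp_pos _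
  -- bound exp EA
  have hs_lb : x ≤ x + (2/3)*x^2 - 2*x^3/(1-x) := by
    have : 2*x^3/(1-x) ≤ (2/3)*x^2 := by
      rw [div_le_iff₀ h1x0]
      nlinarith [mul_nonneg (mul_nonneg hx0.le hx0.le) (by linarith : (0:ℝ) ≤ 1 - 4*x)]
    linarith
  have hs_ub : x + (2/3)*x^2 - 2*x^3/(1-x) ≤ (13/12)*x := by
    have : 0 ≤ 2*x^3/(1-x) := by positivity
    nlinarith [mul_nonneg hx0.le (by linarith : (0:ℝ) ≤ 1/8 - x)]
  have hexpA : Real.exp EA ≤ 1 - x + (169/288)*x^2 + (2/9)*(13/12)^3*x^3 := by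
    have h1 : Real.exp EA ≤ Real.exp (-(x + (2/3)*x^2 - 2*x^3/(1-x))) :=
      Real.exp_le_exp.mpr hEAub
    have h2 := exp_ub3 (x + (2/3)*x^2 - 2*x^3/(1-x)) (by linarith) (by nlinarith)
    have h3 : (x + (2/3)*x^2 - 2*x^3/(1-x))^2 ≤ ((13/12)*x)^2 :=
      pow_le_pow_left₀ (by linarith) hs_ub 2
    have h4 : (x + (2/3)*x^2 - 2*x^3/(1-x))^3 ≤ ((13/12)*x)^3 :=
      pow_le_pow_left₀ (by linarith) hs_ub 3
    nlinarith [h1, h2, h3, h4]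
  -- bound exp EB
  have hexpB : Real.exp EB ≤ 1 + 3*x + (27/4)*x^2 := by
    have h1 : Real.exp EB ≤ Real.exp (3*x) := Real.exp_le_exp.mpr hEBub
    have h2 := exp_ub2 (3*x) (by linarith) (by linarith)
    nlinarith [h1, h2]
  -- final
  have hBpos : (0:ℝ) ≤ x * (1-x)^2 / 2 := by positivity
  have hfinal : Real.exp EA + x*(1-x)^2/2 * Real.exp EB ≤ 1 := by
    have hB2 : x*(1-x)^2/2 * Real.exp EB ≤ x*(1-x)^2/2 * (1 + 3*x + (27/4)*x^2) :=
      mul_le_mul_of_nonneg_left hexpB hBpos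
    have hB3 := polyB x hx0 hx8
    have hx2 := polyx2 x hx0 hx8
    have hx3 := polyx3 x hx0 hx8
    linarith only [hx0, hx8, hexpA, hB2, hB3, hx2, hx3]
  calc Real.exp EA * Real.exp C0 + x*(1-x)^2/2 * (Real.exp EB * Real.exp C0)
      = (Real.exp EA + x*(1-x)^2/2 * Real.exp EB) * Real.exp C0 := by ring
    _ ≤ 1 * Real.exp C0 := mul_le_mul_of_nonneg_right hfinal hC0pos.le
    _ = Real.exp C0 := by ring

set_option maxHeartbeats 1000000 in
lemma step_low (n : ℝ) (hn : 8 ≤ n) :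
    Real.exp (-2*n) * n ^ ((1/4:ℝ) + 2*n) ≤
    n*(n-1) * (Real.exp (-2*(n-1)) * (n-1) ^ ((1/4:ℝ) + 2*(n-1)))
    + (n*(n-1)^2/2) * (Real.exp (-2*(n-2)) * (n-2) ^ ((1/4:ℝ) + 2*(n-2))) := by
  have hn0 : (0:ℝ) < n := by linarith
  have hn1 : (0:ℝ) < n - 1 := by linarith
  have hn2 : (0:ℝ) < n - 2 := by linarith
  obtain ⟨x, hxdef⟩ : ∃ x : ℝ, x = 1/n := ⟨1/n, rfl⟩
  have hnx : n = 1/x := by rw [hxdef]; field_simp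
  have hx0 : 0 < x := by rw [hxdef]; positivity
  have hx8 : x ≤ 1/8 := by rw [hxdef, div_le_div_iff₀ hn0 (by norm_num)]; linarith
  have h1x : 1 - x = (n-1)/n := by rw [hxdef]; field_simp
  have h2x : 1 - 2*x = (n-2)/n := by rw [hxdef]; field_simp
  have h1x0 : 0 < 1 - x := by rw [h1x]; positivity
  have h2x0 : 0 < 1 - 2*x := by rw [h2x]; positivity
  have hlx : Real.log (1-x) = Real.log (n-1) - Real.log n := by
    rw [h1x, Real.log_div (by linarith) (by linarith)]
  have hl2x : Real.log (1-2*x) = Real.log (n-2) - Real.log n := by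
    rw [h2x, Real.log_div (by linarith) (by linarith)]
  rw [Real.rpow_def_of_pos hn0, Real.rpow_def_of_pos hn1, Real.rpow_def_of_pos hn2]
  rw [show Real.exp (-2*n) * Real.exp (Real.log n * (1/4+2*n))
      = Real.exp (-2*n + Real.log n * (1/4+2*n)) from (Real.exp_add _ _).symm]
  set C0 : ℝ := -2*n + Real.log n * (1/4 + 2*n) with hC0
  set EA : ℝ := 2 + (2*n - 3/4) * Real.log (1-x) with hEA
  set EB : ℝ := 4 + (2*n - 15/4) * Real.log (1-2*x) with hEB
  clear_value C0 EA EB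
  -- log bounds
  obtain ⟨hs1, _⟩ := log_series x hx0 (by linarith)
  obtain ⟨hs2, _⟩ := log_series (2*x) (by linarith) (by linarith)
  have hu1 : Real.log (1-x) ≤ -x := log_ub x hx0 (by linarith)
  have hu2 : Real.log (1-2*x) ≤ -(2*x) := by
    have := log_ub (2*x) (by linarith) (by linarith); linarith
  -- bound on EA
  have hEAlb : -(x/4 + (2/3)*x^2 + 2*x^3/(1-x)) ≤ EA := by
    have m1 : 2*n*(-(x + x^2/2 + x^3/3 + x^4/(1-x))) ≤ 2*n*Real.log (1-x) :=
      mul_le_mul_of_nonneg_left hs1 (by linarith)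
    have m2 : 2*n*(-(x + x^2/2 + x^3/3 + x^4/(1-x))) = -(2 + x + (2/3)*x^2 + 2*x^3/(1-x)) := by
      rw [hnx]; field_simp
    have m3 : (3/4)*x ≤ -(3/4) * Real.log (1-x) := by linarith
    have hsplit : EA = 2 + 2*n*Real.log (1-x) + (-(3/4)) * Real.log (1-x) := by rw [hEA]; ring
    rw [hsplit]; rw [m2] at m1; linarith
  -- bound on EB
  have hEBlb : 0 ≤ EB := by
    have m1 : 2*n*(-(2*x + (2*x)^2/2 + (2*x)^3/3 + (2*x)^4/(1-2*x))) ≤ 2*n*Real.log (1-2*x) :=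
      mul_le_mul_of_nonneg_left hs2 (by linarith)
    have m2 : 2*n*(-(2*x + (2*x)^2/2 + (2*x)^3/3 + (2*x)^4/(1-2*x)))
        = -(4 + 4*x + (16/3)*x^2 + 32*x^3/(1-2*x)) := by
      rw [hnx]; field_simp; ring
    have m3 : (15/2)*x ≤ -(15/4) * Real.log (1-2*x) := by linarith
    have h4 : 32*x^3/(1-2*x) ≤ (16/3)*x^2 := by
      rw [div_le_iff₀ h2x0]
      nlinarith [mul_nonneg (mul_nonneg hx0.le hx0.le) (by linarith : (0:ℝ) ≤ 1 - 8*x)]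
    have hsplit : EB = 4 + 2*n*Real.log (1-2*x) + (-(15/4)) * Real.log (1-2*x) := by rw [hEB]; ring
    rw [hsplit]; rw [m2] at m1; nlinarith
  -- Term 1 identity
  have hT1 : n*(n-1) * (Real.exp (-2*(n-1)) * Real.exp (Real.log (n-1) * (1/4 + 2*(n-1))))
      = Real.exp EA * Real.exp C0 := by
    rw [hEA, hC0, hlx, ← Real.exp_add]
    nth_rewrite 1 [← Real.exp_log hn0, ← Real.exp_log hn1]
    rw [← Real.exp_add, ← Real.exp_add, ← Real.exp_add]
    congr 1
    ring
  -- Term 2 identity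
  have hT2 : (n*(n-1)^2/2) * (Real.exp (-2*(n-2)) * Real.exp (Real.log (n-2) * (1/4 + 2*(n-2))))
      = (x * (1-x)^2 / 2) * (Real.exp EB * Real.exp C0) := by
    have hxe : x = Real.exp (-(Real.log n)) := by
      rw [Real.exp_neg, Real.exp_log hn0, hxdef, one_div]
    have h1xe : ((1:ℝ)-x)^2 = Real.exp (2*(Real.log (n-1) - Real.log n)) := by
      rw [two_mul, Real.exp_add, Real.exp_sub, Real.exp_log hn0, Real.exp_log hn1, h1x]
      ring
    rw [hEB, hC0, hl2x, h1xe, hxe, ← Real.exp_add, ← Real.exp_add]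
    nth_rewrite 1 [← Real.exp_log hn0, ← Real.exp_log hn1]
    rw [show Real.exp (Real.log (n-1)) ^ 2 = Real.exp (2 * Real.log (n-1)) by
      rw [two_mul, Real.exp_add]; ring]
    rw [div_eq_mul_inv _ (2:ℝ), show ((2:ℝ))⁻¹ = Real.exp (-(Real.log 2)) by
      rw [Real.exp_neg, Real.exp_log]; norm_num]
    rw [div_eq_mul_inv _ (2:ℝ), show ((2:ℝ))⁻¹ = Real.exp (-(Real.log 2)) by
      rw [Real.exp_neg, Real.exp_log]; norm_num]
    rw [← Real.exp_add, ← Real.exp_add, ← Real.exp_add, ← Real.exp_add, ← Real.exp_add,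
      ← Real.exp_add]
    congr 1
    ring
  rw [hT1, hT2]
  -- final combination
  have hexpA : 1 + EA ≤ Real.exp EA := by linarith [Real.add_one_le_exp EA]
  have hexpB : 1 ≤ Real.exp EB := by
    rw [← Real.exp_zero]; exact Real.exp_le_exp.mpr hEBlb
  have hC0pos : 0 < Real.exp C0 := Real.exp_pos _
  -- final polynomial inequality
  have hfin : 1 ≤ (1 + -(x/4 + (2/3)*x^2 + 2*x^3/(1-x))) + x*(1-x)^2/2 := by
    have hd : 2*x^3/(1-x) ≤ (16/7)*x^3 := by
      rw [div_le_iff₀ h1x0]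
      nlinarith [mul_nonneg (mul_nonneg hx0.le hx0.le) hx0.le]
    nlinarith [mul_nonneg hx0.le (by linarith : (0:ℝ) ≤ 1/8 - x),
      mul_nonneg (mul_nonneg hx0.le hx0.le) (by linarith : (0:ℝ) ≤ 1/8 - x)]
  have e1 : (1 + -(x/4 + (2/3)*x^2 + 2*x^3/(1-x))) ≤ Real.exp EA := by linarith
  have e2 : x*(1-x)^2/2 ≤ x*(1-x)^2/2 * Real.exp EB := by
    nlinarith [mul_pos hx0 (pow_pos h1x0 2)]
  calc Real.exp C0 = 1 * Real.exp C0 := by ring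
    _ ≤ ((1 + -(x/4 + (2/3)*x^2 + 2*x^3/(1-x))) + x*(1-x)^2/2) * Real.exp C0 := by
        apply mul_le_mul_of_nonneg_right hfin (le_of_lt hC0pos)
    _ ≤ (Real.exp EA + x*(1-x)^2/2 * Real.exp EB) * Real.exp C0 := by
        apply mul_le_mul_of_nonneg_right _ (le_of_lt hC0pos); linarith
    _ = Real.exp EA * Real.exp C0 + x*(1-x)^2/2 * (Real.exp EB * Real.exp C0) := by ring


lemma H2 : H 2 = 1 := by norm_num [show (2:ℕ)=0+2 from rfl, H]
lemma H3 : H 3 = 6 := by norm_num [show (3:ℕ)=1+2 from rfl, show (2:ℕ)=0+2 from rfl, H]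
lemma H4 : H 4 = 90 := by norm_num [show (4:ℕ)=2+2 from rfl, H, H3, H2]
lemma H5 : H 5 = 2040 := by norm_num [show (5:ℕ)=3+2 from rfl, H, H4, H3]
lemma H6 : H 6 = 67950 := by norm_num [show (6:ℕ)=4+2 from rfl, H, H5, H4]
lemma H7 : H 7 = 3110940 := by norm_num [show (7:ℕ)=5+2 from rfl, H, H6, H5]

lemma base_gen (k : ℕ) (hv B : ℝ) (hH : H k = hv)
    (h1 : ((k:ℝ)) ^ ((8*k+1:ℕ)) < B^(4:ℕ)) (hB : 0 ≤ B)
    (h2 : B < hv * (2.7182818283:ℝ)^(2*k))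
    (h3 : hv * (2.7182818286:ℝ)^(2*k) < ((k:ℝ))^((2*k+1:ℕ)))
    (hk : 0 < k) (hv0 : 0 < hv) :
    Real.exp (-2 * k) * (k : ℝ) ^ ((1 / 4 : ℝ) + 2 * k) < H k ∧
    H k < Real.exp (-2 * k) * (k : ℝ) ^ ((1 : ℝ) + 2 * k) := by
  have hk0 : (0:ℝ) < (k:ℝ) := by exact_mod_cast hk
  have hexp : Real.exp (-2 * (k:ℝ)) = (Real.exp ((2*k:ℕ):ℝ))⁻¹ := by
    rw [← Real.exp_neg]; congr 1; push_cast; ring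
  have helo : (2.7182818283:ℝ)^(2*k) ≤ Real.exp ((2*k:ℕ):ℝ) := exp_nat_lb (2*k)
  have hehi : Real.exp ((2*k:ℕ):ℝ) ≤ (2.7182818286:ℝ)^(2*k) := exp_nat_ub (2*k)
  have hepos : (0:ℝ) < Real.exp ((2*k:ℕ):ℝ) := Real.exp_pos _
  constructor
  · rw [hH, hexp, inv_mul_lt_iff₀ hepos]
    have h1' : ((k:ℝ)) ^ (4 * ((1/4:ℝ) + 2*(k:ℝ))) < B^(4:ℕ) := by
      rw [show (4 * ((1/4:ℝ) + 2*(k:ℝ))) = ((8*k+1:ℕ):ℝ) by push_cast; ring,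
        Real.rpow_natCast]
      exact h1
    have hlt : ((k:ℝ)) ^ ((1/4:ℝ) + 2*(k:ℝ)) < B :=
      rpow_lt_of_pow4 _ _ _ hk0 hB h1'
    calc ((k:ℝ)) ^ ((1/4:ℝ) + 2*(k:ℝ)) < B := hlt
      _ < hv * (2.7182818283:ℝ)^(2*k) := h2
      _ = (2.7182818283:ℝ)^(2*k) * hv := mul_comm _ _
      _ ≤ Real.exp ((2*k:ℕ):ℝ) * hv := mul_le_mul_of_nonneg_right helo hv0.le
  · rw [hH, hexp]
    rw [show ((1:ℝ) + 2*(k:ℝ)) = ((2*k+1:ℕ):ℝ) by push_cast; ring, Real.rpow_natCast]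
    rw [lt_inv_mul_iff₀ hepos]
    calc Real.exp ((2*k:ℕ):ℝ) * hv ≤ (2.7182818286:ℝ)^(2*k) * hv :=
          mul_le_mul_of_nonneg_right hehi hv0.le
      _ < ((k:ℝ))^((2*k+1:ℕ)) := by rw [mul_comm]; exact h3


theorem stmt_14 : ∀ n : ℕ, 5 ≤ n →
    Real.exp (-2 * n) * (n : ℝ) ^ ((1 / 4 : ℝ) + 2 * n) < H n ∧
    H n < Real.exp (-2 * n) * (n : ℝ) ^ ((1 : ℝ) + 2 * n) := by
  intro n
  induction n using Nat.strong_induction_on with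
  | _ n ih =>
    intro hn
    by_cases h7 : n ≤ 7
    · interval_cases n
      · exact base_gen 5 2040 14604000 H5 (by norm_num) (by norm_num) (by norm_num)
          (by norm_num) (by norm_num) (by norm_num)
      · exact base_gen 6 67950 3410000000 H6 (by norm_num) (by norm_num) (by norm_num)
          (by norm_num) (by norm_num) (by norm_num)
      · exact base_gen 7 3110940 1110000000000 H7 (by norm_num) (by norm_num) (by norm_num)
          (by norm_num) (by norm_num) (by norm_num)
    · push_neg at h7
      obtain ⟨m, rfl⟩ : ∃ m, n = m + 2 := ⟨n - 2, by omega⟩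
      have hm6 : 6 ≤ m := by omega
      have ih1 := ih (m+1) (by omega) (by omega)
      have ih0 := ih m (by omega) (by omega)
      set nR : ℝ := (m:ℝ) + 2 with hnR
      have hmr : (6:ℝ) ≤ (m:ℝ) := by exact_mod_cast hm6
      have h8 : (8:ℝ) ≤ nR := by rw [hnR]; linarith
      have hc2 : ((m+2:ℕ):ℝ) = nR := by rw [hnR]; push_cast; ring
      have hc1 : ((m+1:ℕ):ℝ) = nR - 1 := by rw [hnR]; push_cast; ring
      have hc0 : ((m:ℕ):ℝ) = nR - 2 := by rw [hnR]; push_cast; ring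
      rw [hc1] at ih1
      rw [hc0] at ih0
      have hrec : H (m+2) = nR*(nR-1)*H (m+1) + (nR*(nR-1)^2/2)*H m := by
        show (2 * ((m : ℝ) + 2) * ((m : ℝ) + 1) * H (m + 1)
          + ((m : ℝ) + 2) * ((m : ℝ) + 1) ^ 2 * H m) / 2 = _
        rw [hnR]; ring
      have p1 : (0:ℝ) < nR*(nR-1) := by nlinarith
      have p2 : (0:ℝ) < nR*(nR-1)^2/2 := by nlinarith
      have hlow := step_low nR h8
      have hup := step_up nR h8
      rw [hc2]
      constructor
      · calc Real.exp (-2*nR) * nR ^ ((1/4:ℝ) + 2*nR)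
            ≤ nR*(nR-1) * (Real.exp (-2*(nR-1)) * (nR-1) ^ ((1/4:ℝ) + 2*(nR-1)))
              + (nR*(nR-1)^2/2) * (Real.exp (-2*(nR-2)) * (nR-2) ^ ((1/4:ℝ) + 2*(nR-2))) := hlow
          _ < nR*(nR-1) * H (m+1) + (nR*(nR-1)^2/2) * H m :=
              add_lt_add (mul_lt_mul_of_pos_left ih1.1 p1) (mul_lt_mul_of_pos_left ih0.1 p2)
          _ = H (m+2) := hrec.symm
      · calc H (m+2) = nR*(nR-1) * H (m+1) + (nR*(nR-1)^2/2) * H m := hrec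
          _ < nR*(nR-1) * (Real.exp (-2*(nR-1)) * (nR-1) ^ ((1:ℝ) + 2*(nR-1)))
              + (nR*(nR-1)^2/2) * (Real.exp (-2*(nR-2)) * (nR-2) ^ ((1:ℝ) + 2*(nR-2))) :=
              add_lt_add (mul_lt_mul_of_pos_left ih1.2 p1) (mul_lt_mul_of_pos_left ih0.2 p2)
          _ ≤ Real.exp (-2*nR) * nR ^ ((1:ℝ) + 2*nR) := hup
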